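/- Let $x_1 < \dots < x_n$ with $x_1 \geq 0$, probabilities $q_k \in (0,1)$ summing to 1, $\lambda > 0$. Define $H: (x_n - \lambda, \infty) \to \mathbb{R}$ by $H(x) = \lambda \sum_{k=1}^n \frac{q_k x_k}{\lambda + x - x_k} - x$. Then $H$ is strictly decreasing, $H(x) > 0$ for $x$ slightly above $x_n - \lambda$ (i.e., $H(x) \to +\infty$ as $x \to (x_n - \lambda)^+$ if $x_n > 0$), and $H(x) \to -\infty$ as $x \to \infty$; consequently $H$ has exactly one zero on $(x_n - \lambda, \infty)$. -/

import Mathlib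

/-! The sum is a nonnegative combination of the decreasing functions `y ↦ 1 / (λ + y - x_k)`, so
`H` is strictly decreasing because of the term `-y`. Near `x_n - λ` the term of index `n` alone
already forces `H → +∞`, since the remaining terms are nonnegative; as `y → ∞` the sum tends to
`0` and `H → -∞`. The intermediate value theorem and strict monotonicity then give exactly one
zero. -/

open Filter Topology Set

theorem existsUnique_eq_zero_of_strictAntiOn_Ioi {f : ℝ → ℝ} {p : ℝ}
    (hcont : ContinuousOn f (Ioi p)) (hanti : StrictAntiOn f (Ioi p))
    (hleft : Tendsto f (𝓝[>] p) atTop) (hright : Tendsto f atTop atBot) :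
    ∃! y, y ∈ Ioi p ∧ f y = 0 := by
  obtain ⟨a, hfa, hpa⟩ := ((hleft.eventually_gt_atTop 0).and self_mem_nhdsWithin).exists
  obtain ⟨b, hfb, hab⟩ := ((hright.eventually_lt_atBot 0).and (eventually_gt_atTop a)).exists
  have hsub : Icc a b ⊆ Ioi p := fun z hz => lt_of_lt_of_le hpa hz.1
  obtain ⟨c, hc, hfc⟩ :=
    intermediate_value_Icc' hab.le (hcont.mono hsub) (⟨hfb.le, hfa.le⟩ : (0 : ℝ) ∈ Icc (f b) (f a))
  exact ⟨c, ⟨hsub hc, hfc⟩, fun z hz => hanti.injOn hz.1 (hsub hc) (hz.2.trans hfc.symm)⟩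

noncomputable def heritableGrowthFn {ι : Type*} [Fintype ι] (lam : ℝ) (q x : ι → ℝ) (y : ℝ) : ℝ :=
  lam * (∑ k, q k * x k / (lam + y - x k)) - y

section heritableGrowthFn

variable {ι : Type*} {lam : ℝ} {q x : ι → ℝ} {m : ι}

theorem lam_add_sub_pos_of_mem_Ioi (hxle : ∀ k, x k ≤ x m) {y : ℝ} (hy : y ∈ Ioi (x m - lam))
    (k : ι) : 0 < lam + y - x k := by
  linarith [hxle k, mem_Ioi.1 hy]

variable [Fintype ι]

theorem continuousOn_heritableGrowthFn (hxle : ∀ k, x k ≤ x m) :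
    ContinuousOn (heritableGrowthFn lam q x) (Ioi (x m - lam)) := by
  intro y hy
  refine ContinuousAt.continuousWithinAt ?_
  refine (continuousAt_const.mul (tendsto_finsetSum _ fun k _ => ?_)).sub continuousAt_id
  exact continuousAt_const.div (by fun_prop) (lam_add_sub_pos_of_mem_Ioi hxle hy k).ne'

theorem strictAntiOn_heritableGrowthFn (hlam : 0 ≤ lam) (hw : ∀ k, 0 ≤ q k * x k)
    (hxle : ∀ k, x k ≤ x m) :
    StrictAntiOn (heritableGrowthFn lam q x) (Ioi (x m - lam)) := by
  intro a ha b hb hab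
  have hsum : ∑ k, q k * x k / (lam + b - x k) ≤ ∑ k, q k * x k / (lam + a - x k) :=
    Finset.sum_le_sum fun k _ =>
      div_le_div_of_nonneg_left (hw k) (lam_add_sub_pos_of_mem_Ioi hxle ha k) (by linarith)
  unfold heritableGrowthFn
  nlinarith [mul_le_mul_of_nonneg_left hsum hlam]

theorem tendsto_heritableGrowthFn_nhdsGT (hlam : 0 < lam) (hw : ∀ k, 0 ≤ q k * x k)
    (hwm : 0 < q m * x m) (hxle : ∀ k, x k ≤ x m) :
    Tendsto (heritableGrowthFn lam q x) (𝓝[>] (x m - lam)) atTop := by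
  have hden : Tendsto (fun y => lam + y - x m) (𝓝[>] (x m - lam)) (𝓝[>] 0) := by
    refine tendsto_nhdsWithin_iff.2 ⟨?_, ?_⟩
    · have : Tendsto (fun y => lam + y - x m) (𝓝 (x m - lam)) (𝓝 (lam + (x m - lam) - x m)) :=
        (by fun_prop : Continuous fun y => lam + y - x m).tendsto _
      simpa using this.mono_left nhdsWithin_le_nhds
    · filter_upwards [self_mem_nhdsWithin] with y hy
      exact lam_add_sub_pos_of_mem_Ioi hxle hy m
  have hlower : Tendsto (fun y => lam * (q m * x m) * (lam + y - x m)⁻¹ - y)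
      (𝓝[>] (x m - lam)) atTop :=
    ((tendsto_inv_nhdsGT_zero.comp hden).const_mul_atTop (by positivity)).atTop_add
      (tendsto_id.neg.mono_left nhdsWithin_le_nhds)
  refine tendsto_atTop_mono' _ ?_ hlower
  filter_upwards [self_mem_nhdsWithin] with y hy
  have hterm : q m * x m / (lam + y - x m) ≤ ∑ k, q k * x k / (lam + y - x k) :=
    Finset.single_le_sum (f := fun k => q k * x k / (lam + y - x k))
      (fun k _ => div_nonneg (hw k) (lam_add_sub_pos_of_mem_Ioi hxle hy k).le)
      (Finset.mem_univ m)
  unfold heritableGrowthFn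
  rw [mul_assoc, ← div_eq_mul_inv]
  nlinarith [mul_le_mul_of_nonneg_left hterm hlam.le]

theorem tendsto_heritableGrowthFn_atTop :
    Tendsto (heritableGrowthFn lam q x) atTop atBot := by
  have hsum : Tendsto (fun y => ∑ k, q k * x k / (lam + y - x k)) atTop (𝓝 0) := by
    rw [← Finset.sum_const_zero]
    refine tendsto_finsetSum _ fun k _ => tendsto_const_nhds.div_atTop ?_
    exact (tendsto_atTop_add_const_left _ (lam - x k) tendsto_id).congr fun y => by simp; ring
  exact ((hsum.const_mul lam).add_atBot tendsto_neg_atTop_atBot).congr fun y => by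
    simp [heritableGrowthFn, sub_eq_add_neg]

end heritableGrowthFn

/-- Properties of `H(x) = λ ∑ q_k x_k / (λ + x - x_k) - x`: strictly decreasing,
blows up at the left endpoint, tends to -∞, and has a unique zero. -/
theorem stmt_15 (n : ℕ) (hn : 2 ≤ n) (x q : Fin n → ℝ)
    (hx : StrictMono x) (hx0 : 0 ≤ x ⟨0, by omega⟩)
    (hq : ∀ k, q k ∈ Set.Ioo (0 : ℝ) 1)
    (lam : ℝ) (hlam : 0 < lam)
    (H : ℝ → ℝ)
    (hH : ∀ y, H y = lam * (∑ k, q k * x k / (lam + y - x k)) - y) :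
    StrictAntiOn H (Set.Ioi (x ⟨n - 1, by omega⟩ - lam)) ∧
    Filter.Tendsto H
      (nhdsWithin (x ⟨n - 1, by omega⟩ - lam) (Set.Ioi (x ⟨n - 1, by omega⟩ - lam)))
      Filter.atTop ∧
    Filter.Tendsto H Filter.atTop Filter.atBot ∧
    ∃! y : ℝ, y ∈ Set.Ioi (x ⟨n - 1, by omega⟩ - lam) ∧ H y = 0 := by
  obtain rfl : H = heritableGrowthFn lam q x := funext hH
  have hxle : ∀ k, x k ≤ x ⟨n - 1, by omega⟩ := fun k => hx.monotone (Fin.mk_le_mk.2 (by omega))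
  have hxpos : 0 < x ⟨n - 1, by omega⟩ := hx0.trans_lt (hx (Fin.mk_lt_mk.2 (by omega)))
  have hw : ∀ k, 0 ≤ q k * x k := fun k =>
    mul_nonneg (hq k).1.le (hx0.trans (hx.monotone (Fin.mk_le_mk.2 (Nat.zero_le _))))
  have hanti := strictAntiOn_heritableGrowthFn hlam.le hw hxle
  have hleft := tendsto_heritableGrowthFn_nhdsGT hlam hw (mul_pos (hq _).1 hxpos) hxle
  exact ⟨hanti, hleft, tendsto_heritableGrowthFn_atTop,
    existsUnique_eq_zero_of_strictAntiOn_Ioi (continuousOn_heritableGrowthFn hxle) hanti hleft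
      tendsto_heritableGrowthFn_atTop⟩
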